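/- SCOOC-naive semantics violates INRA: in the AF with arguments a, b, c, d and attacks a↔b (both directions), b→b, b→c, c→d, the SCOOC-naive extensions are {a,c} and {a,d}, both attack b, but {a,d} is not a SCOOC-naive extension of the AF restricted to {a,c,d}. -/

import Mathlib

set_option linter.constructorNameAsVariable false

inductive Arg : Type
  | a | b | c | d
deriving DecidableEq

instance : Fintype Arg where
  elems := {Arg.a, Arg.b, Arg.c, Arg.d}
  complete := by intro x; cases x <;> simp

/-- The attack relation: a↔b (both directions), b→b, b→c, c→d. -/
def att : Arg → Arg → Prop := fun x y =>
  (x = .a ∧ y = .b) ∨ (x = .b ∧ y = .a) ∨ (x = .b ∧ y = .b) ∨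
  (x = .b ∧ y = .c) ∨ (x = .c ∧ y = .d)

def conflictFree (att : Arg → Arg → Prop) (S : Set Arg) : Prop :=
  ∀ x ∈ S, ∀ y ∈ S, ¬ att x y

def attacks (att : Arg → Arg → Prop) (S : Set Arg) (x : Arg) : Prop :=
  ∃ y ∈ S, att y x

/-- The attack relation of the subframework induced on `Ar`. -/
def attIn (Ar : Set Arg) (att : Arg → Arg → Prop) (x y : Arg) : Prop :=
  x ∈ Ar ∧ y ∈ Ar ∧ att x y

def inOddCycle (att : Arg → Arg → Prop) (x : Arg) : Prop :=
  ∃ n : ℕ, Odd n ∧ ∃ p : ℕ → Arg, p 0 = x ∧ p n = x ∧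
    (∀ i, i < n → att (p i) (p (i + 1))) ∧
    (∀ i j, i < j → j ≤ n → p i = p j → i = 0 ∧ j = n)

/-- `S` is strongly complete outside odd cycles in the subframework on `Ar`. -/
def scoocIn (Ar : Set Arg) (att : Arg → Arg → Prop) (S : Set Arg) : Prop :=
  ∀ x ∈ Ar, ¬ inOddCycle (attIn Ar att) x →
    (∀ y ∈ Ar, att y x → ¬ inOddCycle (attIn Ar att) y) →
    (∀ b ∈ S, ¬ att b x) → x ∈ S

/-- `S` is a SCOOC-naive extension of the subframework on `Ar`: ⊆-maximal among
conflict-free subsets of `Ar` that are strongly complete outside odd cycles. -/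
def sccoocNaiveExtIn (Ar : Set Arg) (att : Arg → Arg → Prop) (S : Set Arg) : Prop :=
  S ⊆ Ar ∧ conflictFree att S ∧ scoocIn Ar att S ∧
    ∀ T, T ⊆ Ar → conflictFree att T → scoocIn Ar att T → S ⊆ T → T = S

instance instDecAtt (x y : Arg) : Decidable (att x y) := by
  unfold att; infer_instance

lemma att_to_c : ∀ y, att y Arg.c → y = Arg.b := by decide
lemma att_to_d : ∀ y, att y Arg.d → y = Arg.c := by decide
lemma att_to_a : ∀ y, att y Arg.a → y = Arg.b := by decide
lemma att_from_d : ∀ y, ¬ att Arg.d y := by decide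
lemma att_from_c : ∀ y, att Arg.c y → y = Arg.d := by decide
lemma att_from_a : ∀ y, att Arg.a y → y = Arg.b := by decide
lemma att_bb : att Arg.b Arg.b := by decide
lemma att_ab : att Arg.a Arg.b := by decide
lemma att_cd : att Arg.c Arg.d := by decide

lemma oddB : inOddCycle (attIn Set.univ att) Arg.b := by
  refine ⟨1, odd_one, fun _ => Arg.b, rfl, rfl, ?_, ?_⟩
  · intro i _; exact ⟨trivial, trivial, att_bb⟩
  · intro i j hij hj _; omega

lemma notOddD : ¬ inOddCycle (attIn Set.univ att) Arg.d := by
  rintro ⟨n, hodd, p, h0, hn, hstep, _⟩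
  have hn1 : 1 ≤ n := hodd.pos
  have h := (hstep 0 (by omega)).2.2
  rw [h0] at h
  exact att_from_d _ h

lemma notOddC : ¬ inOddCycle (attIn Set.univ att) Arg.c := by
  rintro ⟨n, hodd, p, h0, hn, hstep, _⟩
  have hn1 : 1 ≤ n := hodd.pos
  have h := (hstep 0 (by omega)).2.2
  rw [h0] at h
  have h1 : p 1 = Arg.d := att_from_c _ h
  rcases eq_or_lt_of_le hn1 with heq | hlt
  · rw [← heq, h1] at hn; exact (by decide : Arg.d ≠ Arg.c) hn
  · have h2 := (hstep 1 hlt).2.2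
    rw [h1] at h2
    exact att_from_d _ h2

lemma notOddC_restr : ¬ inOddCycle (attIn {x | x ≠ Arg.b} att) Arg.c := by
  rintro ⟨n, hodd, p, h0, hn, hstep, _⟩
  have hn1 : 1 ≤ n := hodd.pos
  obtain ⟨hmem, _, hatt⟩ := hstep (n - 1) (by omega)
  have heq : n - 1 + 1 = n := by omega
  rw [heq, hn] at hatt
  exact hmem (att_to_c _ hatt)

/-- In the full framework, SCOOC reduces to the single condition on `d`. -/
lemma scooc_univ_iff (S : Set Arg) :
    scoocIn Set.univ att S ↔ ((∀ y ∈ S, ¬ att y Arg.d) → Arg.d ∈ S) := by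
  constructor
  · intro hsc h
    refine hsc Arg.d trivial notOddD ?_ h
    intro y _ hy
    rw [att_to_d _ hy]; exact notOddC
  · intro h x _ hx hatt hns
    cases x with
    | a => exact absurd oddB (hatt Arg.b trivial (by decide))
    | b => exact absurd oddB hx
    | c => exact absurd oddB (hatt Arg.b trivial (by decide))
    | d => exact h hns

theorem sccoocNaive_violates_INRA :
    (∀ S, sccoocNaiveExtIn Set.univ att S ↔
      (S = ({Arg.a, Arg.c} : Set Arg) ∨ S = ({Arg.a, Arg.d} : Set Arg))) ∧
    (∀ S, sccoocNaiveExtIn Set.univ att S → attacks att S Arg.b) ∧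
    ¬ sccoocNaiveExtIn {x | x ≠ Arg.b} att ({Arg.a, Arg.d} : Set Arg) := by
  have hchar : ∀ S, sccoocNaiveExtIn Set.univ att S ↔
      (S = ({Arg.a, Arg.c} : Set Arg) ∨ S = ({Arg.a, Arg.d} : Set Arg)) := by
    intro S
    constructor
    · rintro ⟨hsub, hcf, hsc, hmax⟩
      -- b ∉ S
      have hb : Arg.b ∉ S := fun hb => hcf _ hb _ hb att_bb
      -- a ∈ S, by maximality applied to insert a S
      have ha : Arg.a ∈ S := by
        have hcf' : conflictFree att (insert Arg.a S) := by
          rintro x hx y hy hxy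
          rcases Set.mem_insert_iff.mp hx with rfl | hx
          · rcases Set.mem_insert_iff.mp hy with rfl | hy
            · exact (by decide : ¬ att Arg.a Arg.a) hxy
            · rw [att_from_a _ hxy] at hy; exact hb hy
          · rcases Set.mem_insert_iff.mp hy with rfl | hy
            · rw [att_to_a _ hxy] at hx; exact hb hx
            · exact hcf _ hx _ hy hxy
        have hsc' : scoocIn Set.univ att (insert Arg.a S) := by
          rw [scooc_univ_iff]
          intro h
          exact Set.mem_insert_iff.mpr (Or.inr
            ((scooc_univ_iff S).mp hsc (fun y hy => h y (Set.mem_insert_iff.mpr (Or.inr hy)))))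
        have := hmax (insert Arg.a S) (fun _ _ => trivial) hcf' hsc' (Set.subset_insert _ _)
        rw [← this]; exact Set.mem_insert _ _
      -- c ∈ S or d ∈ S
      have hcd : Arg.c ∈ S ∨ Arg.d ∈ S := by
        by_cases hc : Arg.c ∈ S
        · exact Or.inl hc
        · refine Or.inr ((scooc_univ_iff S).mp hsc ?_)
          intro y hy hyd
          rw [att_to_d _ hyd] at hy; exact hc hy
      have hnotboth : ¬ (Arg.c ∈ S ∧ Arg.d ∈ S) := fun ⟨hc, hd⟩ => hcf _ hc _ hd att_cd
      rcases hcd with hc | hd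
      · left
        ext x
        cases x with
        | a => simp [ha]
        | b => simpa using hb
        | c => simp [hc]
        | d =>
          simp only [Set.mem_insert_iff, Set.mem_singleton_iff]
          constructor
          · intro hd; exact absurd ⟨hc, hd⟩ hnotboth
          · rintro (h | h) <;> exact absurd h (by decide)
      · right
        have hc : Arg.c ∉ S := fun hc => hnotboth ⟨hc, hd⟩
        ext x
        cases x with
        | a => simp [ha]
        | b => simpa using hb
        | c =>
          simp only [Set.mem_insert_iff, Set.mem_singleton_iff]
          constructor
          · intro h; exact absurd h hc
          · rintro (h | h) <;> exact absurd h (by decide)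
        | d => simp [hd]
    · rintro (rfl | rfl)
      · refine ⟨fun _ _ => trivial, ?_, ?_, ?_⟩
        · rintro x hx y hy hxy
          simp only [Set.mem_insert_iff, Set.mem_singleton_iff] at hx hy
          rcases hx with rfl | rfl <;> rcases hy with rfl | rfl <;> revert hxy <;> decide
        · rw [scooc_univ_iff]
          intro h
          exact absurd att_cd (h Arg.c (by simp))
        · intro T _ hTcf _ hST
          have hc : Arg.c ∈ T := hST (by simp)
          apply Set.Subset.antisymm _ hST
          intro x hx
          cases x with
          | a => simp
          | b => exact absurd att_bb (hTcf _ hx _ hx)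
          | c => simp
          | d => exact absurd att_cd (hTcf _ hc _ hx)
      · refine ⟨fun _ _ => trivial, ?_, ?_, ?_⟩
        · rintro x hx y hy hxy
          simp only [Set.mem_insert_iff, Set.mem_singleton_iff] at hx hy
          rcases hx with rfl | rfl <;> rcases hy with rfl | rfl <;> revert hxy <;> decide
        · rw [scooc_univ_iff]
          intro _
          simp
        · intro T _ hTcf _ hST
          have hd : Arg.d ∈ T := hST (by simp)
          apply Set.Subset.antisymm _ hST
          intro x hx
          cases x with
          | a => simp
          | b => exact absurd att_bb (hTcf _ hx _ hx)
          | c => exact absurd att_cd (hTcf _ hx _ hd)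
          | d => simp
  refine ⟨hchar, ?_, ?_⟩
  · intro S hS
    rcases (hchar S).mp hS with rfl | rfl
    · exact ⟨Arg.a, by simp, att_ab⟩
    · exact ⟨Arg.a, by simp, att_ab⟩
  · rintro ⟨_, _, hsc, _⟩
    have := hsc Arg.c (by simp) notOddC_restr
      (fun y hy hyc => absurd (att_to_c _ hyc) hy)
      (by rintro x hx; simp only [Set.mem_insert_iff, Set.mem_singleton_iff] at hx
          rcases hx with rfl | rfl <;> decide)
    simp at this
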